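/- Let g: Z → ℝ^n be an operator on a convex set Z that is (1/η)-relaxed relatively Lipschitz with respect to a differentiable convex r: Z → ℝ, meaning η⟨g(z') - g(z), z' - z⁺⟩ ≤ V^r_z(z') + V^r_{z'}(z⁺) + V^r_z(z⁺) for all z, z', z⁺ ∈ Z. Consider the iteration w_t := argmin_{w∈Z} ⟨η g(z_t), w⟩ + V^r_{z_t}(w) and z_{t+1} := argmin_{w∈Z} ⟨(η/2) g(w_t), w⟩ + V^r_{z_t}(w) started from z₀ ∈ Z. Then for every u ∈ Z and T ≥ 1, (1/T) Σ_{t=0}^{T-1} ⟨g(w_t), w_t - u⟩ ≤ (2/(ηT)) V^r_{z₀}(u). -/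

import Mathlib

open scoped RealInnerProductSpace

/-- Gradient inequality for a convex function on a convex set. -/
lemma grad_ineq_aux {n : ℕ} {Z : Set (EuclideanSpace ℝ (Fin n))}
    {r : EuclideanSpace ℝ (Fin n) → ℝ}
    {r' : EuclideanSpace ℝ (Fin n) → EuclideanSpace ℝ (Fin n)}
    (hconv : ConvexOn ℝ Z r)
    (hdiff : ∀ x ∈ Z, HasGradientAt r (r' x) x)
    {x : EuclideanSpace ℝ (Fin n)} (hx : x ∈ Z)
    {y : EuclideanSpace ℝ (Fin n)} (hy : y ∈ Z) :
    ⟪r' x, y - x⟫ ≤ r y - r x := by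
  have hc : HasDerivAt (fun t : ℝ => x + t • (y - x)) (y - x) 0 := by
    simpa using ((hasDerivAt_id (0:ℝ)).smul_const (y - x)).const_add x
  have hφ : HasDerivAt (fun t : ℝ => r (x + t • (y - x))) ⟪r' x, y - x⟫ 0 := by
    have hx0 : HasFDerivAt r ((InnerProductSpace.toDual ℝ _) (r' x)) (x + (0:ℝ) • (y - x)) := by
      simpa using (hdiff x hx).hasFDerivAt
    have h := hx0.comp_hasDerivAt 0 hc
    exact h
  have hsl := hasDerivAt_iff_tendsto_slope.mp hφ
  have hmem : Set.Ioc (0:ℝ) 1 ∈ nhdsWithin (0:ℝ) (Set.Ioi 0) :=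
    Ioc_mem_nhdsGT_of_mem (by constructor <;> norm_num)
  have htend : Filter.Tendsto (slope (fun t : ℝ => r (x + t • (y - x))) 0)
      (nhdsWithin 0 (Set.Ioi 0)) (nhds ⟪r' x, y - x⟫) :=
    hsl.mono_left (nhdsWithin_mono _ (fun t ht => ne_of_gt ht))
  refine le_of_tendsto htend ?_
  filter_upwards [hmem] with t ht
  have heq : x + t • (y - x) = (1 - t) • x + t • y := by module
  have hcv := hconv.2 hx hy (by linarith [ht.2] : (0:ℝ) ≤ 1 - t) (le_of_lt ht.1)
    (by ring : (1 - t) + t = 1)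
  rw [← heq] at hcv
  rw [slope_def_field]
  simp only [zero_smul, add_zero, sub_zero, smul_eq_mul] at hcv ⊢
  rw [div_le_iff₀ ht.1]
  nlinarith [ht.1]

/-- Convergence of relaxed mirror prox under relaxed relative Lipschitzness. -/
theorem relaxed_mirror_prox_convergence {n : ℕ}
    (Z : Set (EuclideanSpace ℝ (Fin n))) (hZ : Convex ℝ Z) (hZc : IsCompact Z)
    (r : EuclideanSpace ℝ (Fin n) → ℝ)
    (r' : EuclideanSpace ℝ (Fin n) → EuclideanSpace ℝ (Fin n))
    (hconv : ConvexOn ℝ Z r)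
    (hdiff : ∀ x ∈ Z, HasGradientAt r (r' x) x)
    (V : EuclideanSpace ℝ (Fin n) → EuclideanSpace ℝ (Fin n) → ℝ)
    (hV : ∀ x x', V x x' = r x' - r x - ⟪r' x, x' - x⟫)
    (g : EuclideanSpace ℝ (Fin n) → EuclideanSpace ℝ (Fin n))
    (η : ℝ) (hη : 0 < η)
    (hrrl : ∀ z ∈ Z, ∀ z' ∈ Z, ∀ zp ∈ Z,
      η * ⟪g z' - g z, z' - zp⟫ ≤ V z z' + V z' zp + V z zp)
    (z w : ℕ → EuclideanSpace ℝ (Fin n))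
    (hz : ∀ t, z t ∈ Z) (hw : ∀ t, w t ∈ Z)
    (hwopt : ∀ t, ∀ u ∈ Z, 0 ≤ ⟪η • g (z t) + r' (w t) - r' (z t), u - w t⟫)
    (hzopt : ∀ t, ∀ u ∈ Z,
      0 ≤ ⟪(η / 2) • g (w t) + r' (z (t + 1)) - r' (z t), u - z (t + 1)⟫) :
    ∀ u ∈ Z, ∀ T : ℕ, 1 ≤ T →
      (1 / (T : ℝ)) * ∑ t ∈ Finset.range T, ⟪g (w t), w t - u⟫
        ≤ (2 / (η * (T : ℝ))) * V (z 0) u := by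
  intro u hu T hT
  have hVnn : ∀ x ∈ Z, ∀ y ∈ Z, 0 ≤ V x y := by
    intro x hx y hy
    rw [hV]
    linarith [grad_ineq_aux hconv hdiff hx hy]
  have hstep : ∀ t, η / 2 * ⟪g (w t), w t - u⟫ ≤ V (z t) u - V (z (t + 1)) u := by
    intro t
    have h1 := hzopt t u hu
    have h2 := hwopt t (z (t + 1)) (hz (t + 1))
    have h3 := hrrl (z t) (hz t) (w t) (hw t) (z (t + 1)) (hz (t + 1))
    simp only [hV, inner_add_left, inner_sub_left, inner_sub_right,
      real_inner_smul_left] at h1 h2 h3 ⊢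
    nlinarith [h1, h2, h3]
  have hsum : η / 2 * ∑ t ∈ Finset.range T, ⟪g (w t), w t - u⟫
      ≤ V (z 0) u - V (z T) u := by
    rw [Finset.mul_sum]
    calc ∑ t ∈ Finset.range T, η / 2 * ⟪g (w t), w t - u⟫
        ≤ ∑ t ∈ Finset.range T, (V (z t) u - V (z (t + 1)) u) :=
          Finset.sum_le_sum (fun t _ => hstep t)
      _ = V (z 0) u - V (z T) u := Finset.sum_range_sub' (fun t => V (z t) u) T
  have hTpos : (0:ℝ) < T := by exact_mod_cast hT
  have hS : ∑ t ∈ Finset.range T, ⟪g (w t), w t - u⟫ ≤ 2 / η * V (z 0) u := by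
    have hVT := hVnn (z T) (hz T) u hu
    rw [div_mul_eq_mul_div, le_div_iff₀ hη]
    nlinarith [hsum, hVT]
  have h2' : (0:ℝ) < 1 / T := by positivity
  calc (1 / (T : ℝ)) * ∑ t ∈ Finset.range T, ⟪g (w t), w t - u⟫
      ≤ (1 / (T : ℝ)) * (2 / η * V (z 0) u) := by
        exact mul_le_mul_of_nonneg_left hS (le_of_lt h2')
    _ = (2 / (η * (T : ℝ))) * V (z 0) u := by
        have h1 : η ≠ 0 := ne_of_gt hη
        have h2 : (T : ℝ) ≠ 0 := ne_of_gt hTpos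
        field_simp
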